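/- arXiv:2401.13361 — 2 statements merged into one kernel-verified Lean document; each statement's English description precedes it below -/
import Mathlib

section
/- For θ ≥ 1/4, the DIRK stability function R(z) = (1 + (1-2θ)z + (1/2-2θ+θ²)z²)/(1-θz)² satisfies |R(z)| ≤ 1 for all z with Re z ≤ 0; i.e., the DIRK method is A-stable whenever θ ≥ 1/4. -/
/-! With `x = Re z`, the difference `|(1 - θz)²|² - |1 + (1-2θ)z + (1/2-2θ+θ²)z²|²` is the polynomial
`(θ - 1/4)(2θ - 1)²|z|⁴ - x((10θ² - 6θ + 1)|z|² + 2) + (8θ - 2)x²`.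
Since `10θ² - 6θ + 1 = 10(θ - 3/10)² + 1/10 > 0`, every term is nonnegative once `θ ≥ 1/4` and `x ≤ 0`. -/

open Complex

theorem normSq_dirk_denom_sub_normSq_dirk_numer (θ : ℝ) (z : ℂ) :
    normSq ((1 - (θ : ℂ) * z) ^ 2) -
        normSq (1 + (1 - 2 * (θ : ℂ)) * z + (1/2 - 2 * (θ : ℂ) + (θ : ℂ) ^ 2) * z ^ 2) =
      (θ - 1/4) * (2 * θ - 1) ^ 2 * normSq z ^ 2
        - z.re * ((10 * θ ^ 2 - 6 * θ + 1) * normSq z + 2) + (8 * θ - 2) * z.re ^ 2 := by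
  simp only [normSq_apply, add_re, add_im, mul_re, mul_im, sub_re, sub_im, one_re, one_im,
    ofReal_re, ofReal_im, pow_two, re_ofNat, im_ofNat, div_ofNat_re, div_ofNat_im]
  ring

theorem normSq_dirk_numer_le {θ : ℝ} (hθ : 1 / 4 ≤ θ) {z : ℂ} (hz : z.re ≤ 0) :
    normSq (1 + (1 - 2 * (θ : ℂ)) * z + (1/2 - 2 * (θ : ℂ) + (θ : ℂ) ^ 2) * z ^ 2) ≤
      normSq ((1 - (θ : ℂ) * z) ^ 2) := by
  have hquartic : 0 ≤ (θ - 1/4) * (2 * θ - 1) ^ 2 * normSq z ^ 2 := by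
    have hθ₀ : 0 ≤ θ - 1/4 := by linarith
    positivity
  have hcubic : 0 ≤ -z.re * ((10 * θ ^ 2 - 6 * θ + 1) * normSq z + 2) := by
    have hcoeff : 0 ≤ 10 * θ ^ 2 - 6 * θ + 1 := by nlinarith [sq_nonneg (θ - 3/10)]
    exact mul_nonneg (by linarith) (add_nonneg (mul_nonneg hcoeff (normSq_nonneg z)) zero_le_two)
  have hquadratic : 0 ≤ (8 * θ - 2) * z.re ^ 2 :=
    mul_nonneg (by linarith) (sq_nonneg _)
  have hdiff := normSq_dirk_denom_sub_normSq_dirk_numer θ z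
  linarith

/-- For `θ ≥ 1/4` the DIRK stability function satisfies `|R(z)| ≤ 1` for all `Re z ≤ 0`;
i.e. the DIRK method is A-stable whenever `θ ≥ 1/4`. -/
theorem dirk_A_stable (θ : ℝ) (hθ : 1 / 4 ≤ θ) :
    ∀ z : ℂ, z.re ≤ 0 →
      ‖((1 + (1 - 2 * (θ : ℂ)) * z + (1/2 - 2 * (θ : ℂ) + (θ : ℂ) ^ 2) * z ^ 2) /
          (1 - (θ : ℂ) * z) ^ 2)‖ ≤ 1 := by
  intro z hz
  rw [norm_div]
  refine div_le_one_of_le₀ ?_ (norm_nonneg _)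
  rw [← sq_le_sq₀ (norm_nonneg _) (norm_nonneg _), ← normSq_eq_norm_sq, ← normSq_eq_norm_sq]
  exact normSq_dirk_numer_le hθ hz
end

section
/- Let A be an M×M real matrix, U₀ ∈ ℝ^M, ρ > 0, and let U_ρ : [0,T] → ℝ^M solve the penalized ODE U' = AU + ρ max(U₀ - U, 0) with U(0) = U₀ (componentwise max). Then for every t ∈ [0,T] and every component l, the complementarity-defect is controlled: U_{ρ,l}(t) ≥ U_{0,l} - C/ρ for a constant C depending only on A, U₀ and T (independent of ρ). -/
/-!
The penalty term `ρ max(U₀ - U, 0)` always points towards `U₀`, so it can only decrease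
`‖U - U₀‖²`. Grönwall's inequality for `‖U - U₀‖²` therefore bounds `U` on `[0, T]`
independently of `ρ`, hence also `|(A U)_l| ≤ C`. Each defect `ψ = U₀ l - U l` then satisfies
`ψ' ≤ -ρ ψ + C` with `ψ(0) = 0`, and a second application of Grönwall gives `ψ ≤ C / ρ`.
-/

open Set Finset Matrix

lemma le_gronwallBound_of_hasDerivAt {f f' : ℝ → ℝ} {δ K ε a b : ℝ}
    (hf : ∀ x ∈ Icc a b, HasDerivAt f (f' x) x) (ha : f a ≤ δ)
    (bound : ∀ x ∈ Ico a b, f' x ≤ K * f x + ε) :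
    ∀ x ∈ Icc a b, f x ≤ gronwallBound δ K ε (x - a) :=
  le_gronwallBound_of_liminf_deriv_right_le
    (fun x hx => (hf x hx).continuousAt.continuousWithinAt)
    (fun x hx _ hr => (hf x (Ico_subset_Icc_self hx)).hasDerivWithinAt.liminf_right_slope_le hr)
    ha bound

lemma gronwallBound_neg_le_div {ρ C : ℝ} (hρ : 0 < ρ) (hC : 0 ≤ C) (x : ℝ) :
    gronwallBound 0 (-ρ) C x ≤ C / ρ := by
  simp only [gronwallBound_of_K_ne_0 (neg_ne_zero.2 hρ.ne'), zero_mul, zero_add, div_neg]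
  have : 0 ≤ C / ρ * Real.exp (-ρ * x) := by positivity
  linarith

lemma le_div_of_deriv_le_neg_mul_add {ψ ψ' : ℝ → ℝ} {ρ C a b : ℝ} (hρ : 0 < ρ) (hC : 0 ≤ C)
    (hψ : ∀ x ∈ Icc a b, HasDerivAt ψ (ψ' x) x) (ha : ψ a ≤ 0)
    (bound : ∀ x ∈ Ico a b, ψ' x ≤ -ρ * ψ x + C) :
    ∀ x ∈ Icc a b, ψ x ≤ C / ρ := fun x hx =>
  (le_gronwallBound_of_hasDerivAt hψ ha bound x hx).trans (gronwallBound_neg_le_div hρ hC _)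

section SumSq

variable {ι κ : Type*} [Fintype ι] [Fintype κ]

lemma sum_sq_mulVec_le (A : Matrix ι κ ℝ) (v : κ → ℝ) :
    ∑ i, (A *ᵥ v) i ^ 2 ≤ (∑ i, ∑ j, A i j ^ 2) * ∑ j, v j ^ 2 := by
  rw [Finset.sum_mul]
  exact Finset.sum_le_sum fun i _ => Finset.sum_mul_sq_le_sq_mul_sq _ (A i) v

lemma sum_sq_le_two_mul_sum_sq_sub_add (v c : ι → ℝ) :
    ∑ i, v i ^ 2 ≤ 2 * ∑ i, (v i - c i) ^ 2 + 2 * ∑ i, c i ^ 2 := by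
  rw [Finset.mul_sum, Finset.mul_sum, ← Finset.sum_add_distrib]
  exact Finset.sum_le_sum fun i _ => by nlinarith [sq_nonneg (v i - 2 * c i)]

lemma hasDerivAt_sum_sq_sub {U : ℝ → ι → ℝ} {U' : ι → ℝ} {t : ℝ} (hU : HasDerivAt U U' t)
    (c : ι → ℝ) :
    HasDerivAt (fun s => ∑ i, (U s i - c i) ^ 2) (∑ i, 2 * (U t i - c i) * U' i) t := by
  refine HasDerivAt.fun_sum fun i _ => ?_
  refine (((hasDerivAt_pi.1 hU i).sub_const (c i)).fun_pow 2).congr_deriv ?_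
  norm_num

end SumSq

lemma sub_mul_max_sub_nonpos (u c : ℝ) : (u - c) * max (c - u) 0 ≤ 0 := by
  rcases le_total (c - u) 0 with h | h
  · simp [max_eq_right h]
  · rw [max_eq_left h]; nlinarith

section Penalized

variable {ι : Type*} [Fintype ι]

def penalizedField (A : Matrix ι ι ℝ) (U₀ : ι → ℝ) (ρ : ℝ) (u : ι → ℝ) : ι → ℝ :=
  A *ᵥ u + ρ • fun l => max (U₀ l - u l) 0

def IsPenalizedSolution (A : Matrix ι ι ℝ) (U₀ : ι → ℝ) (ρ T : ℝ) (U : ℝ → ι → ℝ) : Prop :=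
  ∀ t ∈ Icc (0 : ℝ) T, HasDerivAt U (penalizedField A U₀ ρ (U t)) t

variable {A : Matrix ι ι ℝ} {U₀ : ι → ℝ} {ρ T : ℝ} {U : ℝ → ι → ℝ}

@[simp]
lemma penalizedField_apply (u : ι → ℝ) (l : ι) :
    penalizedField A U₀ ρ u l = (A *ᵥ u) l + ρ * max (U₀ l - u l) 0 :=
  rfl

lemma sum_sub_mul_penalizedField_le (hρ : 0 ≤ ρ) (u : ι → ℝ) :
    ∑ l, 2 * (u l - U₀ l) * penalizedField A U₀ ρ u l ≤
      (1 + 2 * ∑ i, ∑ j, A i j ^ 2) * ∑ l, (u l - U₀ l) ^ 2 +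
        2 * (∑ i, ∑ j, A i j ^ 2) * ∑ l, U₀ l ^ 2 := by
  set F := ∑ i, ∑ j, A i j ^ 2
  have hdissipative : ∑ l, 2 * (u l - U₀ l) * penalizedField A U₀ ρ u l
      ≤ ∑ l, (u l - U₀ l) ^ 2 + ∑ l, (A *ᵥ u) l ^ 2 := by
    rw [← Finset.sum_add_distrib]
    refine Finset.sum_le_sum fun l _ => ?_
    have := mul_nonneg hρ (neg_nonneg.2 (sub_mul_max_sub_nonpos (u l) (U₀ l)))
    rw [penalizedField_apply]
    nlinarith [two_mul_le_add_sq (u l - U₀ l) ((A *ᵥ u) l)]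
  have hAu : ∑ l, (A *ᵥ u) l ^ 2 ≤ F * (2 * ∑ l, (u l - U₀ l) ^ 2 + 2 * ∑ l, U₀ l ^ 2) :=
    (sum_sq_mulVec_le A u).trans
      (mul_le_mul_of_nonneg_left (sum_sq_le_two_mul_sum_sq_sub_add u U₀) (by positivity))
  linarith

lemma IsPenalizedSolution.hasDerivAt_apply (hU : IsPenalizedSolution A U₀ ρ T U)
    {t : ℝ} (ht : t ∈ Icc 0 T) (l : ι) :
    HasDerivAt (fun s => U s l) ((A *ᵥ U t) l + ρ * max (U₀ l - U t l) 0) t :=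
  hasDerivAt_pi.1 (hU t ht) l

lemma IsPenalizedSolution.sum_sq_sub_le (hU : IsPenalizedSolution A U₀ ρ T U) (hρ : 0 ≤ ρ)
    (hU0 : U 0 = U₀) {t : ℝ} (ht : t ∈ Icc 0 T) :
    ∑ l, (U t l - U₀ l) ^ 2 ≤
      gronwallBound 0 (1 + 2 * ∑ i, ∑ j, A i j ^ 2)
        (2 * (∑ i, ∑ j, A i j ^ 2) * ∑ l, U₀ l ^ 2) t := by
  simpa using le_gronwallBound_of_hasDerivAt (fun s hs => hasDerivAt_sum_sq_sub (hU s hs) U₀)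
    (by simp [hU0]) (fun s _ => sum_sub_mul_penalizedField_le hρ (U s)) t ht

lemma exists_abs_mulVec_le_of_isPenalizedSolution (A : Matrix ι ι ℝ) (U₀ : ι → ℝ) (T : ℝ) :
    ∃ C, 0 ≤ C ∧ ∀ ρ, 0 ≤ ρ → ∀ U, IsPenalizedSolution A U₀ ρ T U → U 0 = U₀ →
      ∀ t ∈ Icc (0 : ℝ) T, ∀ l, |(A *ᵥ U t) l| ≤ C := by
  set F := ∑ i, ∑ j, A i j ^ 2
  set S₀ := ∑ l, U₀ l ^ 2
  set G := gronwallBound 0 (1 + 2 * F) (2 * F * S₀) T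
  refine ⟨√(F * (2 * G + 2 * S₀)), Real.sqrt_nonneg _, fun ρ hρ U hU hU0 t ht l => ?_⟩
  have hF : 0 ≤ F := by positivity
  have hG : ∑ l, (U t l - U₀ l) ^ 2 ≤ G :=
    (hU.sum_sq_sub_le hρ hU0 ht).trans (gronwallBound_mono le_rfl (by positivity)
      (by positivity) ht.2)
  refine Real.abs_le_sqrt ?_
  calc (A *ᵥ U t) l ^ 2 ≤ ∑ k, (A *ᵥ U t) k ^ 2 :=
        Finset.single_le_sum (f := fun k => (A *ᵥ U t) k ^ 2) (fun _ _ => sq_nonneg _)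
          (Finset.mem_univ l)
    _ ≤ F * ∑ k, U t k ^ 2 := sum_sq_mulVec_le A (U t)
    _ ≤ F * (2 * G + 2 * S₀) := by
        gcongr
        linarith [sum_sq_le_two_mul_sum_sq_sub_add (U t) U₀]

lemma IsPenalizedSolution.sub_le_div (hU : IsPenalizedSolution A U₀ ρ T U) (hρ : 0 < ρ)
    (hU0 : U 0 = U₀) {C : ℝ} (hC : 0 ≤ C) (hAU : ∀ t ∈ Icc 0 T, ∀ l, |(A *ᵥ U t) l| ≤ C) :
    ∀ t ∈ Icc 0 T, ∀ l, U₀ l - U t l ≤ C / ρ := by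
  intro t ht l
  refine le_div_of_deriv_le_neg_mul_add hρ hC (fun s hs => (hU.hasDerivAt_apply hs l).const_sub _)
    (by simp [hU0]) (fun s hs => ?_) t ht
  have hAUs := neg_le_of_abs_le (hAU s (Ico_subset_Icc_self hs) l)
  have hmax := mul_le_mul_of_nonneg_left (le_max_left (U₀ l - U s l) 0) hρ.le
  linarith

end Penalized

theorem penalty_defect_bound_general (M : ℕ) (A : Matrix (Fin M) (Fin M) ℝ)
    (U₀ : Fin M → ℝ) (T : ℝ) :
    ∃ C : ℝ, ∀ ρ : ℝ, 0 < ρ → ∀ U : ℝ → Fin M → ℝ,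
      (∀ t ∈ Set.Icc (0 : ℝ) T,
        HasDerivAt U (A.mulVec (U t) + ρ • fun l => max (U₀ l - U t l) 0) t) →
      U 0 = U₀ →
      ∀ t ∈ Set.Icc (0 : ℝ) T, ∀ l : Fin M, U t l ≥ U₀ l - C / ρ := by
  obtain ⟨C, hC, hAU⟩ := exists_abs_mulVec_le_of_isPenalizedSolution A U₀ T
  refine ⟨C, fun ρ hρ U hU hU0 t ht l => ?_⟩
  have := IsPenalizedSolution.sub_le_div hU hρ hU0 hC (hAU ρ hρ.le U hU hU0) t ht l
  linarith

/-- For the penalized ODE `U' = AU + ρ max(U₀ - U, 0)` with `U(0) = U₀`, the constraint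
violation is `O(1/ρ)`: there is a constant `C` (depending only on `A`, `U₀`, `T`) with
`U_{ρ,l}(t) ≥ U_{0,l} - C/ρ` for all `t ∈ [0,T]`, `l`, and all `ρ > 0`. -/
theorem penalty_defect_bound (M : ℕ) (A : Matrix (Fin M) (Fin M) ℝ)
    (U₀ : Fin M → ℝ) (T : ℝ) (hT : 0 < T) :
    ∃ C : ℝ, ∀ ρ : ℝ, 0 < ρ → ∀ U : ℝ → Fin M → ℝ,
      (∀ t ∈ Set.Icc (0 : ℝ) T,
        HasDerivAt U (A.mulVec (U t) + ρ • fun l => max (U₀ l - U t l) 0) t) →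
      U 0 = U₀ →
      ∀ t ∈ Set.Icc (0 : ℝ) T, ∀ l : Fin M, U t l ≥ U₀ l - C / ρ :=
  penalty_defect_bound_general M A U₀ T
end
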